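/- arXiv:1712.08945 — 8 statements merged into one kernel-verified Lean document; each statement's English description precedes it below -/
import Mathlib

section
/- Let w and θ be continuously differentiable real-valued functions on Ω that vanish on the planes {z = 0} and {z = 1}. Then for every z ∈ [0,1], the horizontal average satisfies |⨍_{[0,l_x]×[0,l_y]} w(x,y,z) θ(x,y,z) dx dy| ≤ 4 · min(z, 1−z) · (⨍_Ω |∂_z w|²)^{1/2} · (⨍_Ω |∂_z θ|²)^{1/2}, where ⨍ denotes the average (integral divided by the measure of the integration domain). -/
/-!
On each vertical line, `u(z)` is the integral of `∂_z u` from whichever boundary plane is nearer,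
so Cauchy–Schwarz in `z` gives `u(z)² ≤ min(z, 1 - z) ∫₀¹ |∂_z u|²`. Integrating this over the
horizontal rectangle (Fubini) bounds the horizontal `L²` norms of `w` and `θ` at height `z`, and
Cauchy–Schwarz in the horizontal variables combines the two bounds. This yields the estimate with
constant `1`.
-/

open MeasureTheory

theorem sq_integral_mul_le {α : Type*} [MeasurableSpace α] {μ : Measure α} {f g : α → ℝ}
    (hf : MemLp f 2 μ) (hg : MemLp g 2 μ) :
    (∫ a, f a * g a ∂μ) ^ 2 ≤ (∫ a, f a ^ 2 ∂μ) * ∫ a, g a ^ 2 ∂μ := by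
  have holder := integral_mul_norm_le_Lp_mul_Lq Real.HolderConjugate.two_two
    (by simpa using hf) (by simpa using hg)
  simp only [Real.norm_eq_abs, Real.rpow_two, sq_abs] at holder
  have habs : |∫ a, f a * g a ∂μ| ≤ √(∫ a, f a ^ 2 ∂μ) * √(∫ a, g a ^ 2 ∂μ) := by
    rw [Real.sqrt_eq_rpow, Real.sqrt_eq_rpow]
    calc |∫ a, f a * g a ∂μ| ≤ ∫ a, |f a| * |g a| ∂μ := by
          simpa only [Real.norm_eq_abs, abs_mul] using
            norm_integral_le_integral_norm (μ := μ) fun a => f a * g a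
      _ ≤ _ := holder
  calc (∫ a, f a * g a ∂μ) ^ 2 ≤ (√(∫ a, f a ^ 2 ∂μ) * √(∫ a, g a ^ 2 ∂μ)) ^ 2 :=
        sq_le_sq' (abs_le.mp habs).1 (abs_le.mp habs).2
    _ = _ := by
        rw [mul_pow, Real.sq_sqrt (integral_nonneg fun _ => sq_nonneg _),
          Real.sq_sqrt (integral_nonneg fun _ => sq_nonneg _)]

theorem Continuous.memLp_two_restrict {X : Type*} [TopologicalSpace X] [MeasurableSpace X]
    [OpensMeasurableSpace X] [T2Space X] {μ : Measure X} [IsFiniteMeasureOnCompacts μ] {f : X → ℝ}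
    (hf : Continuous f) {s : Set X} (hs : IsCompact s) : MemLp f 2 (μ.restrict s) :=
  (memLp_two_iff_integrable_sq hf.aestronglyMeasurable).2
    ((hf.pow 2).continuousOn.integrableOn_compact hs)

theorem sq_sub_le_mul_integral_deriv_sq {f : ℝ → ℝ} (hf : ContDiff ℝ 1 f) {a b : ℝ}
    (hab : a ≤ b) : (f b - f a) ^ 2 ≤ (b - a) * ∫ t in a..b, deriv f t ^ 2 := by
  obtain ⟨hdiff, hcont⟩ := contDiff_one_iff_deriv.mp hf
  have ftc : f b - f a = ∫ t in Set.Icc a b, deriv f t * 1 := by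
    rw [← intervalIntegral.integral_deriv_eq_sub (fun t _ => hdiff t)
      (hcont.intervalIntegrable a b), intervalIntegral.integral_of_le hab,
      integral_Icc_eq_integral_Ioc]
    simp
  have cs := sq_integral_mul_le (μ := volume.restrict (Set.Icc a b))
    (hcont.memLp_two_restrict isCompact_Icc)
    ((continuous_const (y := (1 : ℝ))).memLp_two_restrict isCompact_Icc)
  rw [← ftc] at cs
  simpa [intervalIntegral.integral_of_le hab, integral_Icc_eq_integral_Ioc, hab, mul_comm] using cs

theorem setIntegral_prod_assoc {α β γ E : Type*} [MeasureSpace α] [MeasureSpace β]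
    [MeasureSpace γ] [SFinite (volume : Measure α)] [SFinite (volume : Measure β)]
    [SFinite (volume : Measure γ)] [NormedAddCommGroup E] [NormedSpace ℝ E]
    (f : α × β × γ → E) {s : Set α} {t : Set β} {u : Set γ}
    (hf : IntegrableOn f (s ×ˢ t ×ˢ u)) :
    ∫ p in s ×ˢ t ×ˢ u, f p = ∫ q in s ×ˢ t, ∫ r in u, f (q.1, q.2, r) := by
  have assoc := volume_preserving_prodAssoc (α₁ := α) (β₁ := β) (γ₁ := γ)
  have hpre : MeasurableEquiv.prodAssoc ⁻¹' (s ×ˢ t ×ˢ u) = (s ×ˢ t) ×ˢ u :=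
    Equiv.prod_assoc_preimage
  rw [← assoc.setIntegral_preimage_emb MeasurableEquiv.prodAssoc.measurableEmbedding, hpre,
    Measure.volume_eq_prod, setIntegral_prod]
  · rfl
  · rw [← hpre, ← Measure.volume_eq_prod]
    exact (assoc.integrableOn_comp_preimage MeasurableEquiv.prodAssoc.measurableEmbedding).2 hf

theorem sq_le_min_mul_integral_deriv_sq {f : ℝ → ℝ} (hf : ContDiff ℝ 1 f) (h0 : f 0 = 0)
    (h1 : f 1 = 0) {z : ℝ} (hz : z ∈ Set.Icc (0 : ℝ) 1) :
    f z ^ 2 ≤ min z (1 - z) * ∫ t in Set.Icc (0 : ℝ) 1, deriv f t ^ 2 := by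
  obtain ⟨hz0, hz1⟩ := hz
  have hint : IntervalIntegrable (fun t => deriv f t ^ 2) volume 0 1 :=
    ((contDiff_one_iff_deriv.mp hf).2.pow 2).intervalIntegrable 0 1
  have hsq : 0 ≤ᵐ[volume.restrict (Set.Ioc 0 1)] fun t => deriv f t ^ 2 :=
    Filter.Eventually.of_forall fun t => sq_nonneg _
  have hleft : ∫ t in (0 : ℝ)..z, deriv f t ^ 2 ≤ ∫ t in (0 : ℝ)..1, deriv f t ^ 2 :=
    intervalIntegral.integral_mono_interval le_rfl hz0 hz1 hsq hint
  have hright : ∫ t in z..1, deriv f t ^ 2 ≤ ∫ t in (0 : ℝ)..1, deriv f t ^ 2 :=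
    intervalIntegral.integral_mono_interval hz0 hz1 le_rfl hsq hint
  have bound_left := sq_sub_le_mul_integral_deriv_sq hf hz0
  have bound_right := sq_sub_le_mul_integral_deriv_sq hf hz1
  rw [integral_Icc_eq_integral_Ioc, ← intervalIntegral.integral_of_le zero_le_one]
  rw [h0, sub_zero, sub_zero] at bound_left
  rw [h1, zero_sub, neg_sq] at bound_right
  rcases le_total z (1 - z) with h | h
  · rw [min_eq_left h]
    exact bound_left.trans (mul_le_mul_of_nonneg_left hleft hz0)
  · rw [min_eq_right h]
    exact bound_right.trans (mul_le_mul_of_nonneg_left hright (sub_nonneg.2 hz1))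

noncomputable def derivZ (u : ℝ × ℝ × ℝ → ℝ) (p : ℝ × ℝ × ℝ) : ℝ :=
  deriv (fun t => u (p.1, p.2.1, t)) p.2.2

theorem derivZ_eq_fderiv {u : ℝ × ℝ × ℝ → ℝ} (hu : Differentiable ℝ u) (p : ℝ × ℝ × ℝ) :
    derivZ u p = fderiv ℝ u p (0, 0, 1) := by
  have hline : HasDerivAt (fun t : ℝ => ((p.1, p.2.1, t) : ℝ × ℝ × ℝ)) (0, 0, 1) p.2.2 :=
    (hasDerivAt_const _ _).prodMk ((hasDerivAt_const _ _).prodMk (hasDerivAt_id _))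
  exact ((hu _).hasFDerivAt.comp_hasDerivAt p.2.2 hline).deriv

theorem ContDiff.continuous_derivZ {u : ℝ × ℝ × ℝ → ℝ} (hu : ContDiff ℝ 1 u) :
    Continuous (derivZ u) := by
  rw [funext (derivZ_eq_fderiv (hu.differentiable one_ne_zero))]
  exact (hu.continuous_fderiv one_ne_zero).clm_apply continuous_const

theorem sq_le_min_mul_integral_derivZ_sq {u : ℝ × ℝ × ℝ → ℝ} (hu : ContDiff ℝ 1 u)
    (h0 : ∀ x y : ℝ, u (x, y, 0) = 0) (h1 : ∀ x y : ℝ, u (x, y, 1) = 0)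
    {z : ℝ} (hz : z ∈ Set.Icc (0 : ℝ) 1) (x y : ℝ) :
    u (x, y, z) ^ 2 ≤ min z (1 - z) * ∫ t in Set.Icc (0 : ℝ) 1, derivZ u (x, y, t) ^ 2 :=
  sq_le_min_mul_integral_deriv_sq (f := fun t => u (x, y, t)) (hu.comp (by fun_prop)) (h0 x y)
    (h1 x y) hz

theorem setIntegral_sq_le_min_mul_integral_derivZ_sq {u : ℝ × ℝ × ℝ → ℝ} (hu : ContDiff ℝ 1 u)
    (h0 : ∀ x y : ℝ, u (x, y, 0) = 0) (h1 : ∀ x y : ℝ, u (x, y, 1) = 0)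
    {z : ℝ} (hz : z ∈ Set.Icc (0 : ℝ) 1) {s t : Set ℝ} (hs : IsCompact s) (ht : IsCompact t) :
    ∫ q in s ×ˢ t, u (q.1, q.2, z) ^ 2
      ≤ min z (1 - z) * ∫ p in s ×ˢ t ×ˢ Set.Icc (0 : ℝ) 1, derivZ u p ^ 2 := by
  have hD := hu.continuous_derivZ
  have hslice : Continuous fun q : ℝ × ℝ => ∫ r in Set.Icc (0 : ℝ) 1, derivZ u (q.1, q.2, r) ^ 2 :=
    continuous_parametric_integral_of_continuous (by fun_prop) isCompact_Icc
  rw [setIntegral_prod_assoc (fun p => derivZ u p ^ 2)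
      ((hD.pow 2).continuousOn.integrableOn_compact
      (hs.prod (ht.prod isCompact_Icc))), ← integral_const_mul]
  refine integral_mono_of_nonneg (Filter.Eventually.of_forall fun q => sq_nonneg _)
    ((hslice.continuousOn.integrableOn_compact (hs.prod ht)).const_mul _)
    (Filter.Eventually.of_forall fun q => ?_)
  exact sq_le_min_mul_integral_derivZ_sq hu h0 h1 hz q.1 q.2

theorem abs_setIntegral_mul_le_min_mul_sqrt_mul_sqrt {u v : ℝ × ℝ × ℝ → ℝ}
    (hu : ContDiff ℝ 1 u) (hv : ContDiff ℝ 1 v)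
    (hu0 : ∀ x y : ℝ, u (x, y, 0) = 0) (hu1 : ∀ x y : ℝ, u (x, y, 1) = 0)
    (hv0 : ∀ x y : ℝ, v (x, y, 0) = 0) (hv1 : ∀ x y : ℝ, v (x, y, 1) = 0)
    {z : ℝ} (hz : z ∈ Set.Icc (0 : ℝ) 1) {s t : Set ℝ} (hs : IsCompact s) (ht : IsCompact t) :
    |∫ q in s ×ˢ t, u (q.1, q.2, z) * v (q.1, q.2, z)|
      ≤ min z (1 - z) * (√(∫ p in s ×ˢ t ×ˢ Set.Icc (0 : ℝ) 1, derivZ u p ^ 2)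
        * √(∫ p in s ×ˢ t ×ˢ Set.Icc (0 : ℝ) 1, derivZ v p ^ 2)) := by
  have hslice : Continuous fun q : ℝ × ℝ => ((q.1, q.2, z) : ℝ × ℝ × ℝ) := by fun_prop
  have cs := sq_integral_mul_le
    ((hu.continuous.comp hslice).memLp_two_restrict (μ := volume) (hs.prod ht))
    ((hv.continuous.comp hslice).memLp_two_restrict (μ := volume) (hs.prod ht))
  have hu2 := setIntegral_sq_le_min_mul_integral_derivZ_sq hu hu0 hu1 hz hs ht
  have hv2 := setIntegral_sq_le_min_mul_integral_derivZ_sq hv hv0 hv1 hz hs ht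
  have hm : 0 ≤ min z (1 - z) := le_min hz.1 (sub_nonneg.2 hz.2)
  refine abs_le_of_sq_le_sq ?_ (by positivity)
  rw [mul_pow, mul_pow, Real.sq_sqrt (integral_nonneg fun _ => sq_nonneg _),
    Real.sq_sqrt (integral_nonneg fun _ => sq_nonneg _)]
  calc _ ≤ _ := cs
    _ ≤ _ := mul_le_mul hu2 hv2 (integral_nonneg fun _ => sq_nonneg _) (by positivity)
    _ = _ := by ring

/-- Key interpolation estimate (Lemma 2.8): for `w, θ` continuously differentiable
on `Ω = [0,l_x] × [0,l_y] × [0,1]` vanishing on `{z = 0}` and `{z = 1}`, the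
horizontal average of `w·θ` at height `z` is bounded by
`4 · min(z, 1−z) · (⨍_Ω |∂_z w|²)^{1/2} · (⨍_Ω |∂_z θ|²)^{1/2}`. -/
theorem stmt0 (lx ly : ℝ) (hlx : 0 < lx) (hly : 0 < ly)
    (w θ : ℝ × ℝ × ℝ → ℝ)
    (hw : ContDiff ℝ 1 w) (hθ : ContDiff ℝ 1 θ)
    (hw0 : ∀ x y : ℝ, w (x, y, 0) = 0) (hw1 : ∀ x y : ℝ, w (x, y, 1) = 0)
    (hθ0 : ∀ x y : ℝ, θ (x, y, 0) = 0) (hθ1 : ∀ x y : ℝ, θ (x, y, 1) = 0)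
    (z : ℝ) (hz : z ∈ Set.Icc (0:ℝ) 1) :
    |(lx * ly)⁻¹ * ∫ p in Set.Icc 0 lx ×ˢ Set.Icc 0 ly,
        w (p.1, p.2, z) * θ (p.1, p.2, z)|
      ≤ 4 * min z (1 - z)
        * Real.sqrt ((lx * ly)⁻¹ * ∫ p in Set.Icc 0 lx ×ˢ Set.Icc 0 ly ×ˢ Set.Icc (0:ℝ) 1,
            (deriv (fun t => w (p.1, p.2.1, t)) p.2.2) ^ 2)
        * Real.sqrt ((lx * ly)⁻¹ * ∫ p in Set.Icc 0 lx ×ˢ Set.Icc 0 ly ×ˢ Set.Icc (0:ℝ) 1,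
            (deriv (fun t => θ (p.1, p.2.1, t)) p.2.2) ^ 2) := by
  have hc : 0 ≤ (lx * ly)⁻¹ := by positivity
  have hm : 0 ≤ min z (1 - z) := le_min hz.1 (sub_nonneg.2 hz.2)
  have key := abs_setIntegral_mul_le_min_mul_sqrt_mul_sqrt hw hθ hw0 hw1 hθ0 hθ1 hz
    (isCompact_Icc (a := 0) (b := lx)) (isCompact_Icc (a := 0) (b := ly))
  set A := ∫ p in Set.Icc 0 lx ×ˢ Set.Icc 0 ly ×ˢ Set.Icc (0:ℝ) 1, derivZ w p ^ 2
  set B := ∫ p in Set.Icc 0 lx ×ˢ Set.Icc 0 ly ×ˢ Set.Icc (0:ℝ) 1, derivZ θ p ^ 2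
  have hsqrt_c : √(lx * ly)⁻¹ * √(lx * ly)⁻¹ = (lx * ly)⁻¹ := Real.mul_self_sqrt hc
  rw [abs_mul, abs_of_nonneg hc]
  calc _ ≤ (lx * ly)⁻¹ * (min z (1 - z) * (√A * √B)) := mul_le_mul_of_nonneg_left key hc
    _ ≤ 4 * min z (1 - z) * √((lx * ly)⁻¹ * A) * √((lx * ly)⁻¹ * B) := by
      rw [Real.sqrt_mul hc, Real.sqrt_mul hc]
      nlinarith [mul_nonneg hm (mul_nonneg (Real.sqrt_nonneg A) (Real.sqrt_nonneg B))]
end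

section
/- Let k > 0 and let A ⊆ [0,1] be a Borel measurable set with Lebesgue measure |A|. Then ∫_{A×A} G_k(z, z') dz dz' ≤ (2 |A| / k) · min(|A|, 1/k). -/
/-!
Pointwise, `G_k(z, z') ≤ e^{-k|z - z'|} / (2k)` on `[0,1]²`, since
`sinh a · sinh b ≤ ½ sinh c · e^{a+b-c}` whenever `0 ≤ a ≤ c`. Integrating this majorant over
`z' ∈ A` gives at most `|A| / (2k)` (bounding it by its maximum) and at most `1/k²` (integrating
it over the whole line), so the inner integral is at most `min(|A|/(2k), 1/k²)`; integrating
over `z ∈ A` costs one more factor `|A|`.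
-/

open MeasureTheory

/-- The Green's function of `−d²/dz² + k²` on `[0,1]` with vanishing Dirichlet
boundary conditions. -/
noncomputable def Gk (k z z' : ℝ) : ℝ :=
  (1 / (k * Real.sinh k)) * Real.sinh (k * min z z') * Real.sinh (k * (1 - max z z'))

open Real Set

lemma sinh_mul_sinh_le {a b c : ℝ} (ha : 0 ≤ a) (hac : a ≤ c) :
    sinh a * sinh b ≤ sinh c / 2 * exp (a + b - c) := by
  have h₁ : exp (-a - b) ≤ exp (a - b) := exp_le_exp.2 (by linarith)
  have h₂ : exp (a + b - 2 * c) ≤ exp (b - a) := exp_le_exp.2 (by linarith)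
  have key : sinh c / 2 * exp (a + b - c) - sinh a * sinh b
      = ((exp (a - b) - exp (-a - b)) + (exp (b - a) - exp (a + b - 2 * c))) / 4 := by
    simp only [sinh_eq, sub_eq_add_neg, two_mul, exp_add, exp_neg]
    field_simp
    ring
  linarith

lemma Gk_nonneg {k z z' : ℝ} (hk : 0 < k) (hz : z ∈ Icc (0 : ℝ) 1) (hz' : z' ∈ Icc (0 : ℝ) 1) :
    0 ≤ Gk k z z' := by
  have hmin : 0 ≤ k * min z z' := mul_nonneg hk.le (le_min hz.1 hz'.1)
  have hmax : 0 ≤ k * (1 - max z z') := mul_nonneg hk.le (by linarith [max_le hz.2 hz'.2])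
  have := sinh_pos_iff.2 hk
  have := sinh_nonneg_iff.2 hmin
  have := sinh_nonneg_iff.2 hmax
  unfold Gk
  positivity

lemma Gk_le_exp {k z z' : ℝ} (hk : 0 < k) (hz : z ∈ Icc (0 : ℝ) 1) (hz' : z' ∈ Icc (0 : ℝ) 1) :
    Gk k z z' ≤ exp (-(k * |z - z'|)) / (2 * k) := by
  have hsinh := sinh_mul_sinh_le (b := k * (1 - max z z'))
    (mul_nonneg hk.le (le_min hz.1 hz'.1)) (mul_le_of_le_one_right hk.le (min_le_of_left_le hz.2))
  have hexp : k * min z z' + k * (1 - max z z') - k = -(k * |z - z'|) := by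
    rw [← max_sub_min_eq_abs']
    ring
  rw [hexp] at hsinh
  have hk' : 0 < k * sinh k := mul_pos hk (sinh_pos_iff.2 hk)
  calc Gk k z z' = sinh (k * min z z') * sinh (k * (1 - max z z')) / (k * sinh k) := by
        unfold Gk; ring
    _ ≤ sinh k / 2 * exp (-(k * |z - z'|)) / (k * sinh k) := by gcongr
    _ = exp (-(k * |z - z'|)) / (2 * k) := by field_simp

lemma integrable_exp_neg_mul_abs {k : ℝ} (hk : 0 < k) :
    Integrable fun x : ℝ ↦ exp (-(k * |x|)) := by
  rw [← integrableOn_univ, ← Iic_union_Ioi (a := 0), integrableOn_union]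
  constructor
  · refine (integrableOn_exp_mul_Iic hk 0).congr_fun (fun x hx ↦ ?_) measurableSet_Iic
    rw [abs_of_nonpos (mem_Iic.1 hx), mul_neg, neg_neg]
  · refine (integrableOn_exp_mul_Ioi (neg_lt_zero.2 hk) 0).congr_fun (fun x hx ↦ ?_)
      measurableSet_Ioi
    simp only [abs_of_pos (mem_Ioi.1 hx), neg_mul]

lemma integral_exp_neg_mul_abs {k : ℝ} (hk : 0 < k) :
    ∫ x : ℝ, exp (-(k * |x|)) = 2 / k := by
  rw [integral_comp_abs (f := fun x ↦ exp (-(k * x)))]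
  simp only [← neg_mul]
  rw [integral_exp_mul_Ioi (neg_lt_zero.2 hk), mul_zero, exp_zero]
  field_simp

section GreenKernel

variable {k : ℝ} {A : Set ℝ}

lemma isFiniteMeasure_restrict_of_subset_Icc {a b : ℝ} (hA : A ⊆ Icc a b) :
    IsFiniteMeasure (volume.restrict A) :=
  isFiniteMeasure_restrict.2 ((measure_mono hA).trans_lt measure_Icc_lt_top).ne

lemma ae_restrict_mem_Icc_of_subset {a b : ℝ} (hA : A ⊆ Icc a b) :
    ∀ᵐ z ∂volume.restrict A, z ∈ Icc a b :=
  ae_restrict_of_ae_restrict_of_subset hA (ae_restrict_mem measurableSet_Icc)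

lemma setIntegral_Gk_nonneg (hk : 0 < k) {z : ℝ} (hz : z ∈ Icc (0 : ℝ) 1) (hA : A ⊆ Icc 0 1) :
    0 ≤ ∫ z' in A, Gk k z z' :=
  integral_nonneg_of_ae <| (ae_restrict_mem_Icc_of_subset hA).mono fun _ hz' ↦ Gk_nonneg hk hz hz'

lemma setIntegral_Gk_le (hk : 0 < k) {z : ℝ} (hz : z ∈ Icc (0 : ℝ) 1) (hA : A ⊆ Icc 0 1) :
    ∫ z' in A, Gk k z z' ≤ min ((volume A).toReal / (2 * k)) (1 / k ^ 2) := by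
  have := isFiniteMeasure_restrict_of_subset_Icc hA
  set g : ℝ → ℝ := fun z' ↦ exp (-(k * |z - z'|)) / (2 * k)
  have hg : Integrable g := ((integrable_exp_neg_mul_abs hk).comp_sub_left z).div_const _
  have hGk : IntegrableOn (Gk k z) A :=
    ((by unfold Gk; fun_prop : Continuous (Gk k z)).integrableOn_Icc).mono_set hA
  calc ∫ z' in A, Gk k z z' ≤ ∫ z' in A, g z' :=
        integral_mono_ae hGk hg.integrableOn
          ((ae_restrict_mem_Icc_of_subset hA).mono fun _ hz' ↦ Gk_le_exp hk hz hz')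
    _ ≤ min ((volume A).toReal / (2 * k)) (1 / k ^ 2) := le_min ?_ ?_
  · calc ∫ z' in A, g z' ≤ ∫ _ in A, 1 / (2 * k) :=
          integral_mono hg.integrableOn (integrable_const _) fun _ ↦
            div_le_div_of_nonneg_right (exp_le_one_iff.2 (neg_nonpos.2 (by positivity)))
              (by positivity)
      _ = (volume A).toReal / (2 * k) := by
          rw [setIntegral_const, smul_eq_mul, measureReal_def]
          ring
  · calc ∫ z' in A, g z' ≤ ∫ z', g z' := setIntegral_le_integral hg (ae_of_all _ fun _ ↦ by positivity)
      _ = 1 / k ^ 2 := by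
          rw [integral_div, integral_sub_left_eq_self (fun x ↦ exp (-(k * |x|))),
            integral_exp_neg_mul_abs hk]
          field_simp

end GreenKernel

theorem stmt4_general (k : ℝ) (hk : 0 < k) (A : Set ℝ)
    (hA1 : A ⊆ Set.Icc 0 1) :
    ∫ z in A, ∫ z' in A, Gk k z z'
      ≤ 2 * (volume A).toReal / k * min (volume A).toReal (1 / k) := by
  set a := (volume A).toReal
  have ha : 0 ≤ a := ENNReal.toReal_nonneg
  have := isFiniteMeasure_restrict_of_subset_Icc hA1
  have hinner : ∀ᵐ z ∂volume.restrict A, ‖∫ z' in A, Gk k z z'‖ ≤ min (a / (2 * k)) (1 / k ^ 2) :=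
    (ae_restrict_mem_Icc_of_subset hA1).mono fun z hz ↦ by
      rw [Real.norm_of_nonneg (setIntegral_Gk_nonneg hk hz hA1)]
      exact setIntegral_Gk_le hk hz hA1
  have hmin : min (a / (2 * k)) (1 / k ^ 2) ≤ 2 / k * min a (1 / k) := by
    rw [mul_min_of_nonneg _ _ (by positivity)]
    apply min_le_min <;> field_simp <;> nlinarith
  calc ∫ z in A, ∫ z' in A, Gk k z z' ≤ ‖∫ z in A, ∫ z' in A, Gk k z z'‖ := Real.le_norm_self _
    _ ≤ min (a / (2 * k)) (1 / k ^ 2) * a := by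
        simpa [measureReal_def] using norm_integral_le_of_norm_le_const hinner
    _ ≤ 2 / k * min a (1 / k) * a := by gcongr
    _ = 2 * a / k * min a (1 / k) := by ring

/-- First estimate of Lemma 3.3: for `k > 0` and Borel `A ⊆ [0,1]`,
`∫_{A×A} G_k ≤ (2|A|/k) · min(|A|, 1/k)`. -/
theorem stmt4 (k : ℝ) (hk : 0 < k) (A : Set ℝ)
    (hA : MeasurableSet A) (hA1 : A ⊆ Set.Icc 0 1) :
    ∫ z in A, ∫ z' in A, Gk k z z'
      ≤ 2 * (volume A).toReal / k * min (volume A).toReal (1 / k) :=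
  stmt4_general k hk A hA1
end

section
/- Let k > 0 and let f : [0,1] → ℝ be continuous. Define u(z) = ∫_0^1 G_k(z, z') f(z') dz'. Then u(0) = u(1) = 0, u is twice differentiable on (0,1), and −u''(z) + k² u(z) = f(z) for all z ∈ (0,1). -/
open MeasureTheory intervalIntegral

/-!
Splitting the integral at `z`, the kernel factorises on each piece:
`k sinh k · u(z) = sinh (k (1 - z)) A(z) + sinh (k z) B(z)` (`Gk.potential`) with
`A(z) = ∫₀ᶻ sinh (k t) f t` and `B(z) = ∫_z¹ sinh (k (1 - t)) f t`.
Both `sinh (k z)` and `sinh (k (1 - z))` solve `y'' = k² y`, so this is variation of parameters: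
in the first derivative the terms coming from `A'` and `B'` cancel, and in the second they add
up, by `sinh (k z) cosh (k (1 - z)) + cosh (k z) sinh (k (1 - z)) = sinh k`, to `-k sinh k · f`.
-/

open Set Filter Topology

section FundamentalTheorem

variable {E : Type*} [NormedAddCommGroup E] [NormedSpace ℝ E] [CompleteSpace E]
  {g : ℝ → E} {a b z : ℝ}

theorem ContinuousOn.hasDerivAt_integral_right (hg : ContinuousOn g (Icc a b))
    (hz : z ∈ Ioo a b) : HasDerivAt (fun x => ∫ t in a..x, g t) (g z) z :=
  integral_hasDerivAt_right
    ((hg.mono (Icc_subset_Icc_right hz.2.le)).intervalIntegrable_of_Icc hz.1.le)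
    ((hg.mono Ioo_subset_Icc_self).stronglyMeasurableAtFilter isOpen_Ioo z hz)
    (hg.continuousAt (Icc_mem_nhds hz.1 hz.2))

theorem ContinuousOn.hasDerivAt_integral_left (hg : ContinuousOn g (Icc a b))
    (hz : z ∈ Ioo a b) : HasDerivAt (fun x => ∫ t in x..b, g t) (-g z) z :=
  integral_hasDerivAt_left
    ((hg.mono (Icc_subset_Icc_left hz.1.le)).intervalIntegrable_of_Icc hz.2.le)
    ((hg.mono Ioo_subset_Icc_self).stronglyMeasurableAtFilter isOpen_Ioo z hz)
    (hg.continuousAt (Icc_mem_nhds hz.1 hz.2))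

end FundamentalTheorem

namespace Gk

variable {k : ℝ} {f : ℝ → ℝ} {z : ℝ}

noncomputable def leftMoment (k : ℝ) (f : ℝ → ℝ) (z : ℝ) : ℝ :=
  ∫ t in (0:ℝ)..z, Real.sinh (k * t) * f t

noncomputable def rightMoment (k : ℝ) (f : ℝ → ℝ) (z : ℝ) : ℝ :=
  ∫ t in z..(1:ℝ), Real.sinh (k * (1 - t)) * f t

noncomputable def potential (k : ℝ) (f : ℝ → ℝ) (z : ℝ) : ℝ :=
  Real.sinh (k * (1 - z)) * leftMoment k f z + Real.sinh (k * z) * rightMoment k f z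

noncomputable def potentialDeriv (k : ℝ) (f : ℝ → ℝ) (z : ℝ) : ℝ :=
  k * (Real.cosh (k * z) * rightMoment k f z - Real.cosh (k * (1 - z)) * leftMoment k f z)

theorem potential_zero : potential k f 0 = 0 := by
  simp [potential, leftMoment]

theorem potential_one : potential k f 1 = 0 := by
  simp [potential, rightMoment]

theorem integral_mul_eq_potential (hf : ContinuousOn f (Icc 0 1)) (hz : z ∈ Icc (0:ℝ) 1) :
    ∫ t in (0:ℝ)..1, Gk k z t * f t = 1 / (k * Real.sinh k) * potential k f z := by
  have hcont : ContinuousOn (fun t => Gk k z t * f t) (Icc 0 1) :=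
    ContinuousOn.mul (by unfold Gk; fun_prop) hf
  have hleft : ∫ t in (0:ℝ)..z, Gk k z t * f t
      = 1 / (k * Real.sinh k) * Real.sinh (k * (1 - z)) * leftMoment k f z := by
    rw [leftMoment, ← intervalIntegral.integral_const_mul]
    refine integral_congr fun t ht => ?_
    rw [uIcc_of_le hz.1] at ht
    simp only [Gk, min_eq_right ht.2, max_eq_left ht.2]
    ring
  have hright : ∫ t in z..(1:ℝ), Gk k z t * f t
      = 1 / (k * Real.sinh k) * Real.sinh (k * z) * rightMoment k f z := by
    rw [rightMoment, ← intervalIntegral.integral_const_mul]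
    refine integral_congr fun t ht => ?_
    rw [uIcc_of_le hz.2] at ht
    simp only [Gk, min_eq_left ht.1, max_eq_right ht.1]
    ring
  rw [← integral_add_adjacent_intervals
    ((hcont.mono (Icc_subset_Icc_right hz.2)).intervalIntegrable_of_Icc hz.1)
    ((hcont.mono (Icc_subset_Icc_left hz.1)).intervalIntegrable_of_Icc hz.2),
    hleft, hright, potential]
  ring

variable (hf : ContinuousOn f (Icc 0 1)) (hz : z ∈ Ioo (0:ℝ) 1)
include hf hz

theorem hasDerivAt_leftMoment : HasDerivAt (leftMoment k f) (Real.sinh (k * z) * f z) z :=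
  ContinuousOn.hasDerivAt_integral_right (by fun_prop) hz

theorem hasDerivAt_rightMoment :
    HasDerivAt (rightMoment k f) (-(Real.sinh (k * (1 - z)) * f z)) z :=
  ContinuousOn.hasDerivAt_integral_left (by fun_prop) hz

theorem hasDerivAt_potential : HasDerivAt (potential k f) (potentialDeriv k f z) z := by
  have hsinh : HasDerivAt (fun x => Real.sinh (k * x)) (Real.cosh (k * z) * k) z :=
    ((hasDerivAt_id z).const_mul k).sinh.congr_deriv (by simp)
  have hsinh' : HasDerivAt (fun x => Real.sinh (k * (1 - x)))
      (Real.cosh (k * (1 - z)) * (k * -1)) z :=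
    (((hasDerivAt_id z).const_sub 1).const_mul k).sinh
  refine ((hsinh'.mul (hasDerivAt_leftMoment hf hz)).add
    (hsinh.mul (hasDerivAt_rightMoment hf hz))).congr_deriv ?_
  simp only [potentialDeriv]
  ring

theorem hasDerivAt_potentialDeriv :
    HasDerivAt (potentialDeriv k f) (k ^ 2 * potential k f z - k * Real.sinh k * f z) z := by
  have hcosh : HasDerivAt (fun x => Real.cosh (k * x)) (Real.sinh (k * z) * k) z :=
    ((hasDerivAt_id z).const_mul k).cosh.congr_deriv (by simp)
  have hcosh' : HasDerivAt (fun x => Real.cosh (k * (1 - x)))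
      (Real.sinh (k * (1 - z)) * (k * -1)) z :=
    (((hasDerivAt_id z).const_sub 1).const_mul k).cosh
  have hsinh_add : Real.sinh (k * z) * Real.cosh (k * (1 - z))
      + Real.cosh (k * z) * Real.sinh (k * (1 - z)) = Real.sinh k := by
    rw [← Real.sinh_add]; ring_nf
  refine (((hcosh.mul (hasDerivAt_rightMoment hf hz)).sub
    (hcosh'.mul (hasDerivAt_leftMoment hf hz))).const_mul k).congr_deriv ?_
  simp only [potential]
  linear_combination (-k * f z) * hsinh_add

theorem hasDerivAt_deriv_potential :
    HasDerivAt (deriv (potential k f)) (k ^ 2 * potential k f z - k * Real.sinh k * f z) z := by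
  refine (hasDerivAt_potentialDeriv hf hz).congr_of_eventuallyEq ?_
  filter_upwards [isOpen_Ioo.mem_nhds hz] with x hx
  exact (hasDerivAt_potential hf hx).deriv

end Gk

/-- Green's function identity: for `k > 0`, `f` continuous on `[0,1]`, the function
`u(z) = ∫_0^1 G_k(z,z') f(z') dz'` vanishes at `z = 0, 1`, is twice differentiable
on `(0,1)`, and satisfies `−u'' + k² u = f` there. -/
theorem stmt6 (k : ℝ) (hk : 0 < k) (f : ℝ → ℝ) (hf : ContinuousOn f (Set.Icc 0 1))
    (u : ℝ → ℝ) (hu : ∀ z, u z = ∫ z' in (0:ℝ)..1, Gk k z z' * f z') :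
    u 0 = 0 ∧ u 1 = 0 ∧
      ∀ z ∈ Set.Ioo (0:ℝ) 1,
        DifferentiableAt ℝ u z ∧ DifferentiableAt ℝ (deriv u) z ∧
          -deriv (deriv u) z + k ^ 2 * u z = f z := by
  set c := 1 / (k * Real.sinh k)
  have hu_eq : ∀ z ∈ Icc (0:ℝ) 1, u z = c * Gk.potential k f z := fun z hz =>
    (hu z).trans (Gk.integral_mul_eq_potential hf hz)
  refine ⟨by simp [hu_eq 0 (by simp), Gk.potential_zero],
    by simp [hu_eq 1 (by simp), Gk.potential_one], fun z hz => ?_⟩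
  have hu_nhds : u =ᶠ[𝓝 z] fun x => c * Gk.potential k f x :=
    eventually_of_mem (Icc_mem_nhds hz.1 hz.2) hu_eq
  have hu' : HasDerivAt u (c * Gk.potentialDeriv k f z) z :=
    ((Gk.hasDerivAt_potential hf hz).const_mul c).congr_of_eventuallyEq hu_nhds
  have hu'' : HasDerivAt (deriv u)
      (c * (k ^ 2 * Gk.potential k f z - k * Real.sinh k * f z)) z := by
    refine ((Gk.hasDerivAt_deriv_potential hf hz).const_mul c).congr_of_eventuallyEq ?_
    rw [← deriv_const_mul_field']
    exact hu_nhds.deriv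
  refine ⟨hu'.differentiableAt, hu''.differentiableAt, ?_⟩
  have hc : c * (k * Real.sinh k) = 1 :=
    one_div_mul_cancel (mul_pos hk (Real.sinh_pos_iff.2 hk)).ne'
  rw [hu''.deriv, hu_eq z (Ioo_subset_Icc_self hz)]
  linear_combination f z * hc
end

section
/- Let k > 0 and let f : [0,1] → ℝ be continuous. Then ∫_0^1 ∫_0^1 G_k(z, z') f(z) f(z') dz dz' ≥ 0. -/
/-!
For `z ≤ z'` one has `G_k(z,z') = sinh(k(1-z)) sinh(k(1-z')) ∫_0^z sinh(k(1-r))⁻² dr`, because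
`coth(k(1-r)) / k` is a primitive of `sinh(k(1-r))⁻²`. Hence `G_k(z,z') = ∫_0^1 F(r,z) F(r,z') dr`
with `F(r,z) = 1_{r ≤ z} sinh(k(1-z)) / sinh(k(1-r))`, and by Fubini the quadratic form equals
`∫_0^1 (∫_0^1 F(r,z) f(z) dz)² dr ≥ 0`.
-/

open MeasureTheory intervalIntegral

open Function in
theorem integral_integral_integral_mul_eq_integral_sq {α β : Type*} [MeasurableSpace α]
    [MeasurableSpace β] {μ : Measure α} {ν : Measure β} [IsFiniteMeasure μ] [IsFiniteMeasure ν]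
    {H : α → β → ℝ} (hH : Measurable (uncurry H)) {C : ℝ} (hC : ∀ r z, |H r z| ≤ C) :
    ∫ z, ∫ z', ∫ r, H r z * H r z' ∂μ ∂ν ∂ν = ∫ r, (∫ z, H r z ∂ν) ^ 2 ∂μ := by
  have hint : Integrable (uncurry fun (p : β × β) r => H r p.1 * H r p.2) ((ν.prod ν).prod μ) := by
    refine .of_bound ?_ (C * C) (ae_of_all _ fun q => ?_)
    · exact ((hH.comp (measurable_snd.prodMk (measurable_fst.comp measurable_fst))).mul
        (hH.comp (measurable_snd.prodMk (measurable_snd.comp measurable_fst)))).aestronglyMeasurable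
    · rw [Real.norm_eq_abs, uncurry_def, abs_mul]
      exact mul_le_mul (hC _ _) (hC _ _) (abs_nonneg _) ((abs_nonneg _).trans (hC q.2 q.1.1))
  calc ∫ z, ∫ z', ∫ r, H r z * H r z' ∂μ ∂ν ∂ν
      = ∫ p, ∫ r, H r p.1 * H r p.2 ∂μ ∂ν.prod ν := (integral_prod _ hint.integral_prod_left).symm
    _ = ∫ r, ∫ p, H r p.1 * H r p.2 ∂ν.prod ν ∂μ := integral_integral_swap hint
    _ = ∫ r, (∫ z, H r z ∂ν) ^ 2 ∂μ := by simp_rw [integral_prod_mul, sq]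

theorem hasDerivAt_cosh_div_sinh_one_sub {k r : ℝ} (hr : Real.sinh (k * (1 - r)) ≠ 0) :
    HasDerivAt (fun r => Real.cosh (k * (1 - r)) / Real.sinh (k * (1 - r)))
      (k / Real.sinh (k * (1 - r)) ^ 2) r := by
  have hu : HasDerivAt (fun r : ℝ => k * (1 - r)) (-k) r := by
    simpa using ((hasDerivAt_id r).const_sub 1).const_mul k
  refine (((Real.hasDerivAt_cosh _).comp r hu).div ((Real.hasDerivAt_sinh _).comp r hu)
    hr).congr_deriv ?_
  simp only [Function.comp_apply]
  congr 1
  linear_combination k * Real.cosh_sq (k * (1 - r))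

theorem sinh_div_eq_mul_integral {k z : ℝ} (hk : k ≠ 0) (hz : z < 1) :
    Real.sinh (k * z) / (k * Real.sinh k) =
      Real.sinh (k * (1 - z)) * ∫ r in (0:ℝ)..z, (Real.sinh (k * (1 - r)) ^ 2)⁻¹ := by
  have hne : ∀ r < 1, Real.sinh (k * (1 - r)) ≠ 0 := fun r hr => by
    simp [Real.sinh_eq_zero, hk, sub_eq_zero, hr.ne']
  have hlt : ∀ r ∈ Set.uIcc 0 z, r < 1 := fun r hr =>
    (Set.mem_uIcc.mp hr).elim (fun h => by linarith [h.2]) (fun h => by linarith [h.2])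
  have hderiv : ∀ r ∈ Set.uIcc 0 z, HasDerivAt
      (fun r => Real.cosh (k * (1 - r)) / Real.sinh (k * (1 - r)) / k)
      ((Real.sinh (k * (1 - r)) ^ 2)⁻¹) r := fun r hr =>
    ((hasDerivAt_cosh_div_sinh_one_sub (hne r (hlt r hr))).div_const k).congr_deriv (by field_simp)
  have hint : IntervalIntegrable (fun r => (Real.sinh (k * (1 - r)) ^ 2)⁻¹) volume 0 z :=
    ((by fun_prop : Continuous fun r => Real.sinh (k * (1 - r)) ^ 2).continuousOn.inv₀
      fun r hr => pow_ne_zero 2 (hne r (hlt r hr))).intervalIntegrable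
  have hsinh : Real.sinh (k * z) =
      Real.sinh k * Real.cosh (k * (1 - z)) - Real.cosh k * Real.sinh (k * (1 - z)) := by
    rw [show k * z = k - k * (1 - z) by ring, Real.sinh_sub]
  rw [integral_eq_sub_of_hasDerivAt hderiv hint, hsinh, sub_zero, mul_one]
  field_simp [hne z hz]

noncomputable def greenFactor (k r z : ℝ) : ℝ :=
  if r ≤ z ∧ z ≤ 1 then Real.sinh (k * (1 - z)) / Real.sinh (k * (1 - r)) else 0

theorem abs_greenFactor_le_one {k : ℝ} (hk : 0 < k) (r z : ℝ) : |greenFactor k r z| ≤ 1 := by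
  unfold greenFactor
  split_ifs with h
  · have hz : 0 ≤ Real.sinh (k * (1 - z)) := Real.sinh_nonneg_iff.mpr (by nlinarith)
    have hrz : Real.sinh (k * (1 - z)) ≤ Real.sinh (k * (1 - r)) :=
      Real.sinh_le_sinh.mpr (by nlinarith)
    rw [abs_of_nonneg (div_nonneg hz (hz.trans hrz))]
    exact div_le_one_of_le₀ hrz (hz.trans hrz)
  · simp

theorem measurable_greenFactor (k : ℝ) : Measurable (Function.uncurry (greenFactor k)) := by
  refine Measurable.ite ((measurableSet_le measurable_fst measurable_snd).inter
    (measurableSet_le measurable_snd measurable_const)) ?_ measurable_const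
  exact (Real.continuous_sinh.comp (by fun_prop)).measurable.div
    (Real.continuous_sinh.comp (by fun_prop)).measurable

theorem Gk_eq_integral_greenFactor_mul_of_le {k z z' : ℝ} (hk : k ≠ 0) (hz : 0 ≤ z)
    (hzz' : z ≤ z') (hz' : z' ≤ 1) :
    Gk k z z' = ∫ r in (0:ℝ)..1, greenFactor k r z * greenFactor k r z' := by
  rcases (hzz'.trans hz').lt_or_eq with hz1 | rfl
  · set s : ℝ → ℝ := fun r => Real.sinh (k * (1 - r)) with hs
    have hpointwise : ∀ r, greenFactor k r z * greenFactor k r z' =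
        Set.indicator {r | r ≤ z} (fun r => s z * s z' * (s r ^ 2)⁻¹) r := fun r => by
      by_cases hr : r ≤ z
      · rw [Set.indicator_of_mem (show r ∈ {r | r ≤ z} from hr), greenFactor, greenFactor,
          if_pos ⟨hr, hz1.le⟩, if_pos ⟨hr.trans hzz', hz'⟩]
        ring
      · simp [Set.indicator_of_notMem, hr, greenFactor]
    rw [integral_congr fun r _ => hpointwise r, integral_indicator ⟨hz, hz1.le⟩,
      intervalIntegral.integral_const_mul, Gk, min_eq_left hzz', max_eq_right hzz',
      mul_right_comm (s z), hs, ← sinh_div_eq_mul_integral hk hz1]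
    ring
  · obtain rfl : z' = 1 := le_antisymm hz' hzz'
    simp [Gk, greenFactor]

theorem Gk_comm (k z z' : ℝ) : Gk k z z' = Gk k z' z := by
  rw [Gk, Gk, min_comm, max_comm]

theorem Gk_eq_integral_greenFactor_mul {k z z' : ℝ} (hk : k ≠ 0) (hz : z ∈ Set.Icc (0:ℝ) 1)
    (hz' : z' ∈ Set.Icc (0:ℝ) 1) :
    Gk k z z' = ∫ r in (0:ℝ)..1, greenFactor k r z * greenFactor k r z' := by
  rcases le_total z z' with h | h
  · exact Gk_eq_integral_greenFactor_mul_of_le hk hz.1 h hz'.2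
  · simp_rw [Gk_comm k z, Gk_eq_integral_greenFactor_mul_of_le hk hz'.1 h hz.2, mul_comm]

/-- Positive semi-definiteness of the quadratic form associated with `G_k`
(Lemma 3.2): for `k > 0` and `f` continuous on `[0,1]`,
`∫_0^1 ∫_0^1 G_k(z,z') f(z) f(z') dz dz' ≥ 0`. -/
theorem stmt8 (k : ℝ) (hk : 0 < k) (f : ℝ → ℝ) (hf : ContinuousOn f (Set.Icc 0 1)) :
    0 ≤ ∫ z in (0:ℝ)..1, ∫ z' in (0:ℝ)..1, Gk k z z' * f z * f z' := by
  obtain ⟨M, hM⟩ := isCompact_Icc.exists_bound_of_continuousOn hf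
  -- Clamping extends `f` to a bounded continuous function on `ℝ`, as Fubini needs.
  set g : ℝ → ℝ := fun x => f (Set.projIcc 0 1 zero_le_one x)
  have hg : Continuous g := hf.comp_continuous (continuous_subtype_val.comp continuous_projIcc)
    fun x => (Set.projIcc 0 1 zero_le_one x).2
  have hgf : ∀ x ∈ Set.Icc (0:ℝ) 1, g x = f x := fun x hx => by simp [g, Set.projIcc_of_mem _ hx]
  set H : ℝ → ℝ → ℝ := fun r z => greenFactor k r z * g z
  have hH : ∀ r z, |H r z| ≤ M := fun r z => by
    simpa [H, abs_mul] using mul_le_mul (abs_greenFactor_le_one hk r z)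
      (hM _ (Set.projIcc 0 1 zero_le_one z).2) (abs_nonneg _) zero_le_one
  have hGH : ∀ z ∈ Set.Icc (0:ℝ) 1, ∀ z' ∈ Set.Icc (0:ℝ) 1,
      Gk k z z' * f z * f z' = ∫ r in Set.Ioc 0 1, H r z * H r z' := fun z hz z' hz' => by
    rw [← hgf z hz, ← hgf z' hz', Gk_eq_integral_greenFactor_mul hk.ne' hz hz',
      integral_of_le zero_le_one, ← MeasureTheory.integral_mul_const,
      ← MeasureTheory.integral_mul_const]
    simp only [H]
    congr 1 with r
    ring
  calc 0 ≤ ∫ r in Set.Ioc 0 1, (∫ z in Set.Ioc 0 1, H r z) ^ 2 :=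
        integral_nonneg fun r => sq_nonneg _
    _ = ∫ z in Set.Ioc 0 1, ∫ z' in Set.Ioc 0 1, ∫ r in Set.Ioc 0 1, H r z * H r z' :=
        (integral_integral_integral_mul_eq_integral_sq
          ((measurable_greenFactor k).mul (hg.measurable.comp measurable_snd)) hH).symm
    _ = _ := by
      simp_rw [integral_of_le zero_le_one]
      exact setIntegral_congr_fun measurableSet_Ioc fun z hz =>
        setIntegral_congr_fun measurableSet_Ioc fun z' hz' =>
          (hGH z (Set.Ioc_subset_Icc_self hz) z' (Set.Ioc_subset_Icc_self hz')).symm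
end

section
/- There exists a constant c > 0 with the following property: for every ε ∈ (0, 1], every M ≥ 0, and every continuous function F : [0,1] → ℝ satisfying |F(z)| ≤ M · min(z, 1−z) for all z ∈ [0,1], one has ∫_0^1 (F(z) − 1)² dz + ε M² ≥ c ε^{1/3}. -/
open MeasureTheory intervalIntegral

/-- Abstract one-dimensional form of Howard's lower bound (eq. (6.4)): there is a
universal `c > 0` such that for every `ε ∈ (0,1]`, `M ≥ 0`, and continuous
`F : [0,1] → ℝ` with `|F(z)| ≤ M · min(z, 1−z)`, one has
`∫_0^1 (F(z) − 1)² dz + ε M² ≥ c ε^{1/3}`. -/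
theorem stmt9 :
    ∃ c > (0:ℝ), ∀ ε ∈ Set.Ioc (0:ℝ) 1, ∀ M : ℝ, 0 ≤ M → ∀ F : ℝ → ℝ,
      ContinuousOn F (Set.Icc 0 1) →
      (∀ z ∈ Set.Icc (0:ℝ) 1, |F z| ≤ M * min z (1 - z)) →
      c * ε ^ ((1:ℝ)/3) ≤ (∫ z in (0:ℝ)..1, (F z - 1) ^ 2) + ε * M ^ 2 := by
  refine ⟨1/4, by norm_num, ?_⟩
  rintro ε ⟨hε0, hε1⟩ M hM F hF hbd
  set δ : ℝ := ε ^ ((1:ℝ)/3) with hδ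
  have hδ0 : 0 < δ := Real.rpow_pos_of_pos hε0 _
  have hδ1 : δ ≤ 1 := Real.rpow_le_one hε0.le hε1 (by norm_num)
  have hδ3 : δ ^ 3 = ε := by
    rw [hδ, ← Real.rpow_natCast (ε ^ ((1:ℝ)/3)) 3, ← Real.rpow_mul hε0.le]
    norm_num
  -- continuity of integrand
  have hcont : ContinuousOn (fun z => (F z - 1) ^ 2) (Set.Icc (0:ℝ) 1) := by
    exact ((hF.sub continuousOn_const).pow 2)
  have hI01 : IntervalIntegrable (fun z => (F z - 1) ^ 2) volume 0 1 := by
    apply ContinuousOn.intervalIntegrable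
    rwa [Set.uIcc_of_le (by norm_num : (0:ℝ) ≤ 1)]
  have hI0δ : IntervalIntegrable (fun z => (F z - 1) ^ 2) volume 0 δ := by
    apply ContinuousOn.intervalIntegrable
    rw [Set.uIcc_of_le hδ0.le]
    exact hcont.mono (Set.Icc_subset_Icc le_rfl hδ1)
  have hIδ1 : IntervalIntegrable (fun z => (F z - 1) ^ 2) volume δ 1 := by
    apply ContinuousOn.intervalIntegrable
    rw [Set.uIcc_of_le hδ1]
    exact hcont.mono (Set.Icc_subset_Icc hδ0.le le_rfl)
  have hpos : ∀ a b : ℝ, 0 ≤ a → a ≤ b → b ≤ 1 →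
      IntervalIntegrable (fun z => (F z - 1) ^ 2) volume a b →
      (0:ℝ) ≤ ∫ z in a..b, (F z - 1) ^ 2 := by
    intro a b _ hab _ hI
    apply intervalIntegral.integral_nonneg hab
    intro u _; positivity
  have hsplit : (∫ z in (0:ℝ)..1, (F z - 1) ^ 2) =
      (∫ z in (0:ℝ)..δ, (F z - 1) ^ 2) + ∫ z in δ..1, (F z - 1) ^ 2 :=
    (intervalIntegral.integral_add_adjacent_intervals hI0δ hIδ1).symm
  by_cases hcase : M * δ ≤ 1/2
  · -- integral over [0,δ] is at least δ/4
    have hlow : ∀ z ∈ Set.Icc (0:ℝ) δ, (1/4 : ℝ) ≤ (F z - 1) ^ 2 := by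
      intro z hz
      have hz1 : z ∈ Set.Icc (0:ℝ) 1 := ⟨hz.1, hz.2.trans hδ1⟩
      have h1 : |F z| ≤ M * δ := by
        calc |F z| ≤ M * min z (1 - z) := hbd z hz1
          _ ≤ M * z := by
              apply mul_le_mul_of_nonneg_left (min_le_left _ _) hM
          _ ≤ M * δ := mul_le_mul_of_nonneg_left hz.2 hM
      have h2 : F z ≤ 1/2 := (le_abs_self _).trans (h1.trans hcase)
      have h3 : F z - 1 ≤ -(1/2) := by linarith
      nlinarith [h3]
    have hint : δ * (1/4 : ℝ) ≤ ∫ z in (0:ℝ)..δ, (F z - 1) ^ 2 := by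
      have := intervalIntegral.integral_mono_on hδ0.le
        (_root_.intervalIntegrable_const (c := (1/4:ℝ))) hI0δ hlow
      simpa using this
    have h2 := hpos δ 1 hδ0.le hδ1 le_rfl hIδ1
    have hεM : 0 ≤ ε * M ^ 2 := by positivity
    rw [hsplit]; linarith
  · push_neg at hcase
    have h1 := hpos 0 1 le_rfl (by norm_num) le_rfl hI01
    have h2 : (1/4:ℝ) * δ ≤ ε * M ^ 2 := by
      rw [← hδ3]; nlinarith [sq_nonneg (M * δ - 1/2), hδ0]
    linarith
end

section
/- There exists a constant c > 0 with the following property. Let w and θ be continuously differentiable real-valued functions on Ω that vanish on the planes {z = 0} and {z = 1}, and let F(z) = ⨍_{[0,l_x]×[0,l_y]} w(x,y,z) θ(x,y,z) dx dy denote the horizontal average of their product. Then for every ε ∈ (0, 1], ∫_0^1 (F(z) − 1)² dz + ε · (⨍_Ω |∂_z w|²) · (⨍_Ω |∂_z θ|²) ≥ c ε^{1/3}. -/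
/-!
Since `w` vanishes at `z = 0`, the fundamental theorem of calculus and Cauchy–Schwarz in `z` give
`w(x,y,z)² ≤ z ∫₀¹ |∂_z w(x,y,·)|²`, and likewise for `θ`. Cauchy–Schwarz in `(x,y)` then bounds the
flux by `F(z)² ≤ z² K`, where `K` is the product of the two averaged vertical energies. Put
`δ = ε^{1/3}`: either `4δ²K ≥ 1`, and then the penalty `ε K = δ³ K` is at least `δ/4`, or
`|F| < 1/2` on `[0, δ]`, and then `∫₀¹ (F - 1)² ≥ δ/4`.
-/

open MeasureTheory Set

theorem sq_integral_mul_le_integral_sq_mul_integral_sq {α : Type*} [MeasurableSpace α]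
    {μ : Measure α} {f g : α → ℝ} (hf : Integrable (fun a => f a ^ 2) μ)
    (hg : Integrable (fun a => g a ^ 2) μ) (hfg : Integrable (fun a => f a * g a) μ) :
    (∫ a, f a * g a ∂μ) ^ 2 ≤ (∫ a, f a ^ 2 ∂μ) * ∫ a, g a ^ 2 ∂μ := by
  have hquad : ∀ t : ℝ, 0 ≤ (∫ a, g a ^ 2 ∂μ) * (t * t) + (2 * ∫ a, f a * g a ∂μ) * t
      + ∫ a, f a ^ 2 ∂μ := fun t => by
    have hexpand : ∫ a, (f a + t * g a) ^ 2 ∂μ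
        = ∫ a, f a ^ 2 + ((2 * t) * (f a * g a) + (t * t) * g a ^ 2) ∂μ :=
      integral_congr_ae (.of_forall fun a => by ring)
    have h1 : Integrable (fun a => (2 * t) * (f a * g a)) μ := hfg.const_mul _
    have h2 : Integrable (fun a => (t * t) * g a ^ 2) μ := hg.const_mul _
    have h12 : Integrable (fun a => (2 * t) * (f a * g a) + (t * t) * g a ^ 2) μ := h1.add h2
    rw [integral_add hf h12, integral_add h1 h2, integral_const_mul, integral_const_mul]
      at hexpand
    have hnonneg : 0 ≤ ∫ a, (f a + t * g a) ^ 2 ∂μ := integral_nonneg fun a => sq_nonneg _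
    linarith
  have hdiscrim := discrim_le_zero hquad
  rw [discrim] at hdiscrim
  nlinarith

theorem sq_sub_le_mul_setIntegral_deriv_sq {f : ℝ → ℝ} (hf : ContDiff ℝ 1 f) {a b z : ℝ}
    (hz : z ∈ Icc a b) :
    (f z - f a) ^ 2 ≤ (z - a) * ∫ r in Icc a b, deriv f r ^ 2 := by
  have hf' : Continuous (deriv f) := hf.continuous_deriv le_rfl
  have hsub : Ioc a z ⊆ Icc a b := fun r hr => ⟨hr.1.le, hr.2.trans hz.2⟩
  have hint : IntegrableOn (fun r => deriv f r ^ 2) (Icc a b) :=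
    (hf'.pow 2).continuousOn.integrableOn_compact isCompact_Icc
  have hftc : f z - f a = ∫ r in Ioc a z, 1 * deriv f r := by
    simp only [one_mul]
    rw [← intervalIntegral.integral_of_le hz.1, intervalIntegral.integral_deriv_eq_sub
      (fun r _ => hf.differentiable one_ne_zero r) (hf'.intervalIntegrable a z)]
  have hcs := sq_integral_mul_le_integral_sq_mul_integral_sq (μ := volume.restrict (Ioc a z))
    (f := fun _ => 1) (g := deriv f) (by simp) (hint.mono_set hsub)
    (by
      simp only [one_mul]
      exact (hf'.continuousOn.integrableOn_compact isCompact_Icc).mono_set hsub)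
  calc (f z - f a) ^ 2 ≤ (z - a) * ∫ r in Ioc a z, deriv f r ^ 2 := by
        simpa [hftc, hz.1] using hcs
    _ ≤ (z - a) * ∫ r in Icc a b, deriv f r ^ 2 :=
        mul_le_mul_of_nonneg_left (setIntegral_mono_set hint
          (.of_forall fun r => sq_nonneg _) hsub.eventuallyLE) (sub_nonneg.2 hz.1)

theorem setIntegral_prod_prod_eq_setIntegral_setIntegral {α β γ E : Type*} [MeasurableSpace α]
    [MeasurableSpace β] [MeasurableSpace γ] [NormedAddCommGroup E] [NormedSpace ℝ E]
    {μ : Measure α} {ν : Measure β} {ρ : Measure γ} [SFinite μ] [SFinite ν] [SFinite ρ]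
    {f : α × β × γ → E} {s : Set α} {t : Set β}
    {u : Set γ} (hf : IntegrableOn f (s ×ˢ t ×ˢ u) (μ.prod (ν.prod ρ))) :
    ∫ p in s ×ˢ t ×ˢ u, f p ∂μ.prod (ν.prod ρ)
      = ∫ q in s ×ˢ t, ∫ r in u, f (q.1, q.2, r) ∂ρ ∂μ.prod ν := by
  have hassoc := measurePreserving_prodAssoc (μ.restrict s) (ν.restrict t) (ρ.restrict u)
  rw [IntegrableOn, ← Measure.prod_restrict, ← Measure.prod_restrict,
    ← hassoc.integrable_comp_emb MeasurableEquiv.prodAssoc.measurableEmbedding] at hf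
  rw [← Measure.prod_restrict, ← Measure.prod_restrict, ← Measure.prod_restrict,
    ← hassoc.integral_comp MeasurableEquiv.prodAssoc.measurableEmbedding]
  exact integral_prod _ hf

theorem hasDerivAt_vertical {w : ℝ × ℝ × ℝ → ℝ} (hw : Differentiable ℝ w) (x y z : ℝ) :
    HasDerivAt (fun t => w (x, y, t)) (fderiv ℝ w (x, y, z) (0, 0, 1)) z :=
  (hw _).hasFDerivAt.comp_hasDerivAt z
    ((hasDerivAt_const z x).prodMk ((hasDerivAt_const z y).prodMk (hasDerivAt_id z)))

theorem ContDiff.continuous_deriv_vertical {w : ℝ × ℝ × ℝ → ℝ} (hw : ContDiff ℝ 1 w) :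
    Continuous fun p : ℝ × ℝ × ℝ => deriv (fun t => w (p.1, p.2.1, t)) p.2.2 := by
  simp_rw [(hasDerivAt_vertical (hw.differentiable one_ne_zero) _ _ _).deriv]
  exact (hw.continuous_fderiv_apply one_ne_zero).comp (continuous_id.prodMk continuous_const)

theorem ContDiff.vertical {w : ℝ × ℝ × ℝ → ℝ} (hw : ContDiff ℝ 1 w) (x y : ℝ) :
    ContDiff ℝ 1 fun t => w (x, y, t) :=
  hw.comp (contDiff_const.prodMk (contDiff_const.prodMk contDiff_id))

noncomputable def fibreEnergy (f : ℝ × ℝ × ℝ → ℝ) (q : ℝ × ℝ) : ℝ :=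
  ∫ r in Icc (0:ℝ) 1, deriv (fun t => f (q.1, q.2, t)) r ^ 2

theorem fibreEnergy_nonneg (f : ℝ × ℝ × ℝ → ℝ) (q : ℝ × ℝ) : 0 ≤ fibreEnergy f q :=
  integral_nonneg fun _ => sq_nonneg _

theorem ContDiff.continuous_fibreEnergy {w : ℝ × ℝ × ℝ → ℝ} (hw : ContDiff ℝ 1 w) :
    Continuous (fibreEnergy w) :=
  continuous_parametric_integral_of_continuous
    ((hw.continuous_deriv_vertical.comp (by fun_prop :
      Continuous fun p : (ℝ × ℝ) × ℝ => (p.1.1, p.1.2, p.2))).pow 2) isCompact_Icc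

theorem setIntegral_deriv_vertical_sq_eq_setIntegral_fibreEnergy {w : ℝ × ℝ × ℝ → ℝ}
    (hw : ContDiff ℝ 1 w) {s t : Set ℝ} (hs : IsCompact s) (ht : IsCompact t) :
    ∫ p in s ×ˢ t ×ˢ Icc (0:ℝ) 1, deriv (fun τ => w (p.1, p.2.1, τ)) p.2.2 ^ 2
      = ∫ q in s ×ˢ t, fibreEnergy w q :=
  setIntegral_prod_prod_eq_setIntegral_setIntegral
    ((hw.continuous_deriv_vertical.pow 2).continuousOn.integrableOn_compact
      (hs.prod (ht.prod isCompact_Icc)))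

theorem setIntegral_sq_le_mul_setIntegral_fibreEnergy {w : ℝ × ℝ × ℝ → ℝ}
    (hw : ContDiff ℝ 1 w) (hw0 : ∀ x y, w (x, y, 0) = 0) {K : Set (ℝ × ℝ)} (hK : IsCompact K)
    {z : ℝ} (hz : z ∈ Icc 0 1) :
    ∫ q in K, w (q.1, q.2, z) ^ 2 ≤ z * ∫ q in K, fibreEnergy w q := by
  rw [← integral_const_mul]
  refine setIntegral_mono_on ?_ ?_ hK.measurableSet fun q _ => ?_
  · exact (Continuous.continuousOn (by fun_prop)).integrableOn_compact hK
  · exact (continuous_const.mul hw.continuous_fibreEnergy).continuousOn.integrableOn_compact hK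
  · simpa [hw0, fibreEnergy] using sq_sub_le_mul_setIntegral_deriv_sq (hw.vertical q.1 q.2) hz

theorem sq_setIntegral_mul_le {w θ : ℝ × ℝ × ℝ → ℝ} (hw : ContDiff ℝ 1 w) (hθ : ContDiff ℝ 1 θ)
    (hw0 : ∀ x y, w (x, y, 0) = 0) (hθ0 : ∀ x y, θ (x, y, 0) = 0) {K : Set (ℝ × ℝ)}
    (hK : IsCompact K) {z : ℝ} (hz : z ∈ Icc 0 1) :
    (∫ q in K, w (q.1, q.2, z) * θ (q.1, q.2, z)) ^ 2
      ≤ z ^ 2 * ((∫ q in K, fibreEnergy w q) * ∫ q in K, fibreEnergy θ q) := by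
  have hint : ∀ {f : ℝ × ℝ → ℝ}, Continuous f → IntegrableOn f K := fun hf =>
    hf.continuousOn.integrableOn_compact hK
  have hwc := hw.continuous
  have hθc := hθ.continuous
  calc (∫ q in K, w (q.1, q.2, z) * θ (q.1, q.2, z)) ^ 2
      ≤ (∫ q in K, w (q.1, q.2, z) ^ 2) * ∫ q in K, θ (q.1, q.2, z) ^ 2 :=
        sq_integral_mul_le_integral_sq_mul_integral_sq (hint (by fun_prop)) (hint (by fun_prop))
          (hint (by fun_prop))
    _ ≤ (z * ∫ q in K, fibreEnergy w q) * (z * ∫ q in K, fibreEnergy θ q) :=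
        mul_le_mul (setIntegral_sq_le_mul_setIntegral_fibreEnergy hw hw0 hK hz)
          (setIntegral_sq_le_mul_setIntegral_fibreEnergy hθ hθ0 hK hz)
          (integral_nonneg fun _ => sq_nonneg _)
          (mul_nonneg hz.1 (integral_nonneg (fibreEnergy_nonneg w)))
    _ = _ := by ring

theorem div_four_le_integral_sub_one_sq_add {F : ℝ → ℝ} {δ K : ℝ} (hδ0 : 0 < δ) (hδ1 : δ ≤ 1)
    (hK : 0 ≤ K) (hFi : IntervalIntegrable (fun z => (F z - 1) ^ 2) volume 0 1)
    (hFK : ∀ z ∈ Icc (0:ℝ) 1, F z ^ 2 ≤ z ^ 2 * K) :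
    δ / 4 ≤ (∫ z in (0:ℝ)..1, (F z - 1) ^ 2) + δ ^ 3 * K := by
  rcases le_or_gt 1 (4 * δ ^ 2 * K) with hlarge | hsmall
  · have : 0 ≤ ∫ z in (0:ℝ)..1, (F z - 1) ^ 2 :=
      intervalIntegral.integral_nonneg zero_le_one fun z _ => sq_nonneg _
    nlinarith
  · calc δ / 4 = ∫ _ in (0:ℝ)..δ, (1 / 4 : ℝ) := by simp; ring
      _ ≤ ∫ z in (0:ℝ)..δ, (F z - 1) ^ 2 := by
        refine intervalIntegral.integral_mono_on hδ0.le intervalIntegrable_const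
          (hFi.mono_set ?_) fun z hz => ?_
        · rw [uIcc_of_le hδ0.le, uIcc_of_le zero_le_one]
          exact Icc_subset_Icc le_rfl hδ1
        · have hFz := hFK z ⟨hz.1, hz.2.trans hδ1⟩
          nlinarith [mul_le_mul_of_nonneg_right (pow_le_pow_left₀ hz.1 hz.2 2) hK]
      _ ≤ ∫ z in (0:ℝ)..1, (F z - 1) ^ 2 :=
        intervalIntegral.integral_mono_interval le_rfl hδ0.le hδ1
          (.of_forall fun _ => sq_nonneg _) hFi
      _ ≤ _ := le_add_of_nonneg_right (by positivity)

/-- Howard's a priori lower bound (eq. (6.4)): there is a universal `c > 0` such that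
for all `l_x, l_y > 0`, all continuously differentiable `w, θ` on
`Ω = [0,l_x] × [0,l_y] × [0,1]` vanishing on `{z = 0}` and `{z = 1}`, and all
`ε ∈ (0,1]`, the horizontally averaged flux `F(z) = ⨍ w θ` satisfies
`∫_0^1 (F(z) − 1)² dz + ε (⨍_Ω |∂_z w|²)(⨍_Ω |∂_z θ|²) ≥ c ε^{1/3}`. -/
theorem stmt10 :
    ∃ c > (0:ℝ), ∀ lx ly : ℝ, 0 < lx → 0 < ly →
      ∀ w θ : ℝ × ℝ × ℝ → ℝ,
      ContDiff ℝ 1 w → ContDiff ℝ 1 θ →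
      (∀ x y : ℝ, w (x, y, 0) = 0) → (∀ x y : ℝ, w (x, y, 1) = 0) →
      (∀ x y : ℝ, θ (x, y, 0) = 0) → (∀ x y : ℝ, θ (x, y, 1) = 0) →
      ∀ ε ∈ Set.Ioc (0:ℝ) 1,
      c * ε ^ ((1:ℝ)/3)
        ≤ (∫ z in (0:ℝ)..1,
              ((lx * ly)⁻¹ * (∫ p in Set.Icc 0 lx ×ˢ Set.Icc 0 ly,
                  w (p.1, p.2, z) * θ (p.1, p.2, z)) - 1) ^ 2)
          + ε * ((lx * ly)⁻¹ * ∫ p in Set.Icc 0 lx ×ˢ Set.Icc 0 ly ×ˢ Set.Icc (0:ℝ) 1,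
                  (deriv (fun t => w (p.1, p.2.1, t)) p.2.2) ^ 2)
              * ((lx * ly)⁻¹ * ∫ p in Set.Icc 0 lx ×ˢ Set.Icc 0 ly ×ˢ Set.Icc (0:ℝ) 1,
                  (deriv (fun t => θ (p.1, p.2.1, t)) p.2.2) ^ 2) := by
  refine ⟨1 / 4, by norm_num, fun lx ly hlx hly w θ hw hθ hw0 _ hθ0 _ ε ⟨hε0, hε1⟩ => ?_⟩
  have hK : IsCompact (Icc 0 lx ×ˢ Icc 0 ly) := isCompact_Icc.prod isCompact_Icc
  rw [setIntegral_deriv_vertical_sq_eq_setIntegral_fibreEnergy hw isCompact_Icc isCompact_Icc,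
    setIntegral_deriv_vertical_sq_eq_setIntegral_fibreEnergy hθ isCompact_Icc isCompact_Icc]
  set F := fun z => (lx * ly)⁻¹ * ∫ p in Icc 0 lx ×ˢ Icc 0 ly, w (p.1, p.2, z) * θ (p.1, p.2, z)
  set A := (lx * ly)⁻¹ * ∫ q in Icc 0 lx ×ˢ Icc 0 ly, fibreEnergy w q
  set B := (lx * ly)⁻¹ * ∫ q in Icc 0 lx ×ˢ Icc 0 ly, fibreEnergy θ q
  have hF : ∀ z ∈ Icc (0:ℝ) 1, F z ^ 2 ≤ z ^ 2 * (A * B) := fun z hz => by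
    calc F z ^ 2 = _ := mul_pow _ _ _
      _ ≤ _ := mul_le_mul_of_nonneg_left (sq_setIntegral_mul_le hw hθ hw0 hθ0 hK hz)
        (sq_nonneg (lx * ly)⁻¹)
      _ = z ^ 2 * (A * B) := by simp only [A, B]; ring
  have hFc : Continuous F :=
    continuous_const.mul (continuous_parametric_integral_of_continuous (by fun_prop) hK)
  have hAB : 0 ≤ A * B :=
    mul_nonneg (mul_nonneg (by positivity) (integral_nonneg (fibreEnergy_nonneg w)))
      (mul_nonneg (by positivity) (integral_nonneg (fibreEnergy_nonneg θ)))
  have hδ3 : (ε ^ ((1:ℝ) / 3)) ^ 3 = ε := by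
    rw [one_div]; exact_mod_cast Real.rpow_inv_natCast_pow hε0.le three_ne_zero
  have key := div_four_le_integral_sub_one_sq_add (Real.rpow_pos_of_pos hε0 _)
    (Real.rpow_le_one hε0.le hε1 (by norm_num : (0:ℝ) ≤ 1 / 3)) hAB
    (((hFc.sub continuous_const).pow 2).intervalIntegrable 0 1) hF
  rw [hδ3] at key
  linarith
end

section
/- There exist constants C > 0 and ε₀ ∈ (0, 1) with the following property: for every ε ∈ (0, ε₀] there exist real numbers a, b with 1/2 ≤ a < b < 1 and a continuously differentiable, strictly positive, decreasing function ℓ : [a, b] → ℝ with |ℓ'(z)| ≤ 1 for all z ∈ [a,b], such that ℓ(b) + ∫_a^b ℓ'(z)² dz + ε · ( ℓ(a)^{−2} + ∫_a^b ℓ(z)^{−2} dz + ℓ(b)^{−1} )² ≤ C ε^{1/3} (log(1/ε))^{4/3}. -/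
/-!
Take `ℓ(z) ≈ √(2 s (1 - z))` on `[1/2, 1 - s]`. Then `ℓ'² ≈ s / (2 (1 - z))` and
`ℓ⁻² ≈ 1 / (2 s (1 - z))`, so with `L = log (1/ε)` both integrals are at most `log (1 / (2 s)) ≤ L`
times `s / 2` resp. `1 / (2 s)`, while `ℓ(b) ≈ s` and `ℓ(a)⁻², ℓ(b)⁻¹ ≲ 1 / s`. The energy is
therefore `≲ s L + ε L² / s²`, and the choice `s³ = ε L` makes both terms `ε^{1/3} L^{4/3}`.
-/

open MeasureTheory intervalIntegral Real Set

lemma abs_lt_sqrt_sq_add_sq {s : ℝ} (hs : s ≠ 0) (u : ℝ) : |u| < √(u ^ 2 + s ^ 2) := by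
  rw [lt_sqrt (abs_nonneg u), sq_abs]
  exact lt_add_of_pos_right _ (by positivity)

lemma integral_inv_one_sub {a b : ℝ} (ha : a < 1) (hb : b < 1) :
    ∫ z in a..b, (1 - z)⁻¹ = log ((1 - a) / (1 - b)) := by
  rw [intervalIntegral.integral_comp_sub_left (fun x => x⁻¹) 1,
    integral_inv_of_pos (by linarith) (by linarith)]

lemma integral_le_mul_log_of_le_mul_inv_one_sub {f : ℝ → ℝ} {K a b : ℝ} (hab : a ≤ b) (hb : b < 1)
    (hf : IntervalIntegrable f volume a b) (hle : ∀ z ∈ Icc a b, f z ≤ K * (1 - z)⁻¹) :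
    ∫ z in a..b, f z ≤ K * log ((1 - a) / (1 - b)) := by
  have hint : IntervalIntegrable (fun z => K * (1 - z)⁻¹) volume a b := by
    refine (ContinuousOn.intervalIntegrable ?_)
    refine continuousOn_const.mul (ContinuousOn.inv₀ (by fun_prop) fun z hz => ?_)
    rw [uIcc_of_le hab] at hz
    exact sub_ne_zero.2 (by linarith [hz.2])
  calc ∫ z in a..b, f z ≤ ∫ z in a..b, K * (1 - z)⁻¹ := integral_mono_on hab hf hint hle
    _ = K * log ((1 - a) / (1 - b)) := by
      rw [intervalIntegral.integral_const_mul, integral_inv_one_sub (by linarith) hb]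

lemma mul_log_one_div_le_two_mul_sqrt {ε : ℝ} (hε : 0 < ε) : ε * log (1 / ε) ≤ 2 * √ε := by
  have hsq : 0 < √ε := sqrt_pos.2 hε
  have hlog : log (1 / ε) = 2 * log (1 / √ε) := by
    rw [one_div, one_div, log_inv, log_inv, log_sqrt hε.le]; ring
  calc ε * log (1 / ε) ≤ ε * (2 * (1 / √ε)) := by
        rw [hlog]; gcongr; exact log_le_self (by positivity)
    _ = 2 * √ε := by
        field_simp
        rw [sq_sqrt hε.le]

/-- A regularisation of `√(2 s (1 - z))`: comparable to it where `s ≤ 1 - z`, but positive and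
smooth on all of `ℝ`, since the theorem asks for `ContDiff ℝ 1` on the whole line. -/
noncomputable def branchingProfile (s z : ℝ) : ℝ :=
  √(s * (1 - z + √((1 - z) ^ 2 + s ^ 2)))

namespace branchingProfile

variable {s : ℝ}

lemma radicand_pos (hs : 0 < s) (z : ℝ) : 0 < s * (1 - z + √((1 - z) ^ 2 + s ^ 2)) := by
  have := abs_lt_sqrt_sq_add_sq hs.ne' (1 - z)
  have := neg_abs_le (1 - z)
  exact mul_pos hs (by linarith)

lemma pos (hs : 0 < s) (z : ℝ) : 0 < branchingProfile s z :=
  sqrt_pos.2 (radicand_pos hs z)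

lemma sq_eq (hs : 0 < s) (z : ℝ) :
    branchingProfile s z ^ 2 = s * (1 - z + √((1 - z) ^ 2 + s ^ 2)) :=
  sq_sqrt (radicand_pos hs z).le

lemma contDiff (hs : 0 < s) {n : WithTop ℕ∞} : ContDiff ℝ n (branchingProfile s) := by
  have hq : ContDiff ℝ n fun z : ℝ => √((1 - z) ^ 2 + s ^ 2) :=
    ContDiff.sqrt (by fun_prop) fun z => by positivity
  exact ContDiff.sqrt (contDiff_const.mul ((contDiff_const.sub contDiff_id).add hq))
    fun z => (radicand_pos hs z).ne'

lemma hasDerivAt (hs : 0 < s) (z : ℝ) :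
    HasDerivAt (branchingProfile s)
      (-branchingProfile s z / (2 * √((1 - z) ^ 2 + s ^ 2))) z := by
  have hq : 0 < (1 - z) ^ 2 + s ^ 2 := by positivity
  have hr : HasDerivAt (fun z : ℝ => √((1 - z) ^ 2 + s ^ 2))
      (2 * (1 - z) * (-1) / (2 * √((1 - z) ^ 2 + s ^ 2))) z := by
    refine HasDerivAt.sqrt ?_ hq.ne'
    simpa using (((hasDerivAt_id z).const_sub 1).pow 2).add_const (s ^ 2)
  refine ((((hasDerivAt_id z).const_sub 1).add hr).const_mul s).sqrt
    (radicand_pos hs z).ne' |>.congr_deriv ?_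
  have hℓ := pos hs z
  have hℓsq := sq_eq hs z
  have hsq : 0 < √((1 - z) ^ 2 + s ^ 2) := sqrt_pos.2 hq
  unfold branchingProfile at hℓ hℓsq ⊢
  simp only [Pi.add_apply, id]
  field_simp
  linear_combination hℓsq

lemma deriv_eq (hs : 0 < s) (z : ℝ) :
    deriv (branchingProfile s) z = -branchingProfile s z / (2 * √((1 - z) ^ 2 + s ^ 2)) :=
  (hasDerivAt hs z).deriv

lemma strictAnti (hs : 0 < s) : StrictAnti (branchingProfile s) :=
  strictAnti_of_deriv_neg fun z => by
    rw [deriv_eq hs]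
    exact div_neg_of_neg_of_pos (neg_neg_of_pos (pos hs z)) (by positivity)

lemma deriv_sq_le (hs : 0 < s) (z : ℝ) :
    deriv (branchingProfile s) z ^ 2 ≤ s / (2 * √((1 - z) ^ 2 + s ^ 2)) := by
  have hr := abs_lt_sqrt_sq_add_sq hs.ne' (1 - z)
  have hu := le_abs_self (1 - z)
  have hr0 : 0 < √((1 - z) ^ 2 + s ^ 2) := (abs_nonneg _).trans_lt hr
  rw [deriv_eq hs, div_pow, neg_sq, sq_eq hs, div_le_div_iff₀ (by positivity) (by positivity)]
  nlinarith [mul_pos hs hr0]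

lemma abs_deriv_le_one (hs : 0 < s) (z : ℝ) : |deriv (branchingProfile s) z| ≤ 1 := by
  have hr : s ≤ √((1 - z) ^ 2 + s ^ 2) := le_sqrt_of_sq_le (by nlinarith)
  rw [← sq_le_one_iff_abs_le_one]
  calc deriv (branchingProfile s) z ^ 2 ≤ s / (2 * √((1 - z) ^ 2 + s ^ 2)) := deriv_sq_le hs z
    _ ≤ 1 := by rw [div_le_one (by linarith)]; linarith

lemma deriv_sq_le_mul_inv (hs : 0 < s) {z : ℝ} (hz : z < 1) :
    deriv (branchingProfile s) z ^ 2 ≤ s / 2 * (1 - z)⁻¹ := by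
  have hr : 1 - z ≤ √((1 - z) ^ 2 + s ^ 2) := le_sqrt_of_sq_le (by nlinarith)
  calc deriv (branchingProfile s) z ^ 2 ≤ s / (2 * √((1 - z) ^ 2 + s ^ 2)) := deriv_sq_le hs z
    _ ≤ s / (2 * (1 - z)) := by gcongr
    _ = s / 2 * (1 - z)⁻¹ := by field_simp

lemma two_mul_mul_one_sub_le_sq (hs : 0 < s) (z : ℝ) :
    2 * s * (1 - z) ≤ branchingProfile s z ^ 2 := by
  have := abs_lt_sqrt_sq_add_sq hs.ne' (1 - z)
  have := le_abs_self (1 - z)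
  rw [sq_eq hs]
  nlinarith

lemma sq_param_le_sq (hs : 0 < s) {z : ℝ} (hz : z ≤ 1) : s ^ 2 ≤ branchingProfile s z ^ 2 := by
  have hr : s ≤ √((1 - z) ^ 2 + s ^ 2) := le_sqrt_of_sq_le (by nlinarith)
  rw [sq_eq hs]
  nlinarith

lemma sq_le (hs : 0 < s) {z : ℝ} (hz : z ≤ 1) :
    branchingProfile s z ^ 2 ≤ s * (2 * (1 - z) + s) := by
  have hr : √((1 - z) ^ 2 + s ^ 2) ≤ 1 - z + s := by
    rw [sqrt_le_left (by linarith)]; nlinarith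
  rw [sq_eq hs]
  nlinarith

lemma one_div_sq_le_mul_inv (hs : 0 < s) {z : ℝ} (hz : z < 1) :
    1 / branchingProfile s z ^ 2 ≤ (2 * s)⁻¹ * (1 - z)⁻¹ := by
  rw [← mul_inv, one_div]
  exact inv_anti₀ (by nlinarith) (by linarith [two_mul_mul_one_sub_le_sq hs z])

lemma integral_deriv_sq_le (hs : 0 < s) {a b : ℝ} (hab : a ≤ b) (hb : b < 1) :
    ∫ z in a..b, deriv (branchingProfile s) z ^ 2 ≤ s / 2 * log ((1 - a) / (1 - b)) :=
  integral_le_mul_log_of_le_mul_inv_one_sub hab hb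
    (((contDiff hs).continuous_deriv le_rfl).pow 2 |>.intervalIntegrable _ _)
    fun _ hz => deriv_sq_le_mul_inv hs (hz.2.trans_lt hb)

lemma integral_one_div_sq_le (hs : 0 < s) {a b : ℝ} (hab : a ≤ b) (hb : b < 1) :
    ∫ z in a..b, 1 / branchingProfile s z ^ 2 ≤ (2 * s)⁻¹ * log ((1 - a) / (1 - b)) :=
  integral_le_mul_log_of_le_mul_inv_one_sub hab hb
    ((continuous_const.div ((contDiff hs (n := 0)).continuous.pow 2) fun z =>
      pow_ne_zero 2 (pos hs z).ne').intervalIntegrable _ _)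
    fun _ hz => one_div_sq_le_mul_inv hs (hz.2.trans_lt hb)

end branchingProfile

noncomputable def reducedEnergy (ε a b : ℝ) (ℓ : ℝ → ℝ) : ℝ :=
  ℓ b + (∫ z in a..b, (deriv ℓ z) ^ 2)
    + ε * (1 / (ℓ a) ^ 2 + (∫ z in a..b, 1 / (ℓ z) ^ 2) + 1 / ℓ b) ^ 2

lemma reducedEnergy_branchingProfile_le {ε s L : ℝ} (hs : 0 < s) (hs2 : s ≤ 1 / 2) (hε : 0 ≤ ε)
    (hL : log (1 / (2 * s)) ≤ L) :
    reducedEnergy ε (1 / 2) (1 - s) (branchingProfile s)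
      ≤ 2 * s + s / 2 * L + ε * ((2 + L / 2) / s) ^ 2 := by
  set ℓ := branchingProfile s
  have hlog : log ((1 - 1 / 2) / (1 - (1 - s))) ≤ L := by
    rwa [sub_sub_cancel, show (1 - 1 / 2 : ℝ) / s = 1 / (2 * s) by ring]
  have hab : (1 : ℝ) / 2 ≤ 1 - s := by linarith
  have hb : 1 - s < 1 := by linarith
  have hℓb : ℓ (1 - s) ≤ 2 * s := by
    rw [← pow_le_pow_iff_left₀ (branchingProfile.pos hs _).le (by positivity) two_ne_zero]
    nlinarith [branchingProfile.sq_le hs hb.le]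
  have hℓb' : s ≤ ℓ (1 - s) := by
    rw [← pow_le_pow_iff_left₀ hs.le (branchingProfile.pos hs _).le two_ne_zero]
    exact branchingProfile.sq_param_le_sq hs hb.le
  have hℓa : s ≤ ℓ (1 / 2) ^ 2 := by
    nlinarith [branchingProfile.two_mul_mul_one_sub_le_sq hs (1 / 2)]
  have hI₁ : ∫ z in (1 / 2)..(1 - s), deriv ℓ z ^ 2 ≤ s / 2 * L :=
    (branchingProfile.integral_deriv_sq_le hs hab hb).trans (by gcongr)
  have hI₂ : ∫ z in (1 / 2)..(1 - s), 1 / ℓ z ^ 2 ≤ (2 * s)⁻¹ * L :=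
    (branchingProfile.integral_one_div_sq_le hs hab hb).trans (by gcongr)
  have hS₀ : 0 ≤ 1 / ℓ (1 / 2) ^ 2 + (∫ z in (1 / 2)..(1 - s), 1 / ℓ z ^ 2) + 1 / ℓ (1 - s) := by
    have := intervalIntegral.integral_nonneg (μ := volume) hab fun z _ =>
      (by positivity : 0 ≤ 1 / ℓ z ^ 2)
    have := branchingProfile.pos hs (1 - s)
    positivity
  have hS : 1 / ℓ (1 / 2) ^ 2 + (∫ z in (1 / 2)..(1 - s), 1 / ℓ z ^ 2) + 1 / ℓ (1 - s)
      ≤ (2 + L / 2) / s := by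
    have h₁ := one_div_le_one_div_of_le hs hℓa
    have h₂ := one_div_le_one_div_of_le hs hℓb'
    have : (2 + L / 2) / s = 1 / s + (2 * s)⁻¹ * L + 1 / s := by field_simp; ring
    linarith
  exact add_le_add (add_le_add hℓb hI₁) (by gcongr)

lemma reducedEnergy_branchingProfile_le_of_cube_eq {ε s L : ℝ} (hs : 0 < s) (hs2 : s ≤ 1 / 2)
    (hL : log (1 / (2 * s)) ≤ L) (hL4 : 4 ≤ L) (hcube : s ^ 3 = ε * L) :
    reducedEnergy ε (1 / 2) (1 - s) (branchingProfile s) ≤ 3 * s * L := by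
  have hL0 : 0 < L := by linarith
  have hε : ε = s ^ 3 / L := by field_simp; linarith
  have htail : s * (2 + L / 2) ^ 2 / L ≤ s * L := by
    have : (2 + L / 2) ^ 2 ≤ L ^ 2 := by nlinarith
    rw [div_le_iff₀ hL0]; nlinarith [mul_le_mul_of_nonneg_left this hs.le]
  calc reducedEnergy ε (1 / 2) (1 - s) (branchingProfile s)
      ≤ 2 * s + s / 2 * L + ε * ((2 + L / 2) / s) ^ 2 :=
        reducedEnergy_branchingProfile_le hs hs2 (by rw [hε]; positivity) hL
    _ = 2 * s + s / 2 * L + s * (2 + L / 2) ^ 2 / L := by rw [hε]; field_simp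
    _ ≤ 3 * s * L := by nlinarith

lemma mul_log_one_div_lt_of_le_exp {ε : ℝ} (hε : 0 < ε) (hε₀ : ε ≤ exp (-10)) :
    ε * log (1 / ε) < 1 / 8 := by
  have hexp : 16 < exp 5 := by linarith [quadratic_le_exp_of_nonneg (x := 5) (by norm_num)]
  have hsqrt : √ε ≤ exp (-5) := by
    rw [show (-5 : ℝ) = -10 / 2 by norm_num, exp_half]; exact sqrt_le_sqrt hε₀
  have : exp (-5) < 1 / 16 := by rw [exp_neg, one_div]; exact inv_strictAnti₀ (by norm_num) hexp
  linarith [mul_log_one_div_le_two_mul_sqrt hε]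

lemma log_one_div_two_mul_le_of_cube_eq {ε s L : ℝ} (hε : 0 < ε) (hε₁ : ε ≤ 1) (hs : 0 < s)
    (hL : 1 ≤ L) (hcube : s ^ 3 = ε * L) : log (1 / (2 * s)) ≤ log (1 / ε) := by
  have hεs : ε ≤ s := le_of_pow_le_pow_left₀ three_ne_zero hs.le (by
    nlinarith [pow_le_one₀ hε.le hε₁ (n := 2)])
  exact log_le_log (by positivity) (by rw [one_div_le_one_div (by positivity) hε]; linarith)

/-- Scaling upper bound for the one-dimensional reduced branching problem
(eq. (1.14)): there are `C > 0` and `ε₀ ∈ (0,1)` such that for every `ε ∈ (0,ε₀]`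
there exist `1/2 ≤ a < b < 1` and a continuously differentiable, strictly positive,
decreasing lengthscale function `ℓ` on `[a,b]` with `|ℓ'| ≤ 1`, satisfying
`ℓ(b) + ∫_a^b ℓ'² + ε (ℓ(a)⁻² + ∫_a^b ℓ⁻² + ℓ(b)⁻¹)² ≤ C ε^{1/3} (log(1/ε))^{4/3}`. -/
theorem stmt11 :
    ∃ C > (0:ℝ), ∃ ε₀ ∈ Set.Ioo (0:ℝ) 1, ∀ ε ∈ Set.Ioc (0:ℝ) ε₀,
      ∃ a b : ℝ, 1/2 ≤ a ∧ a < b ∧ b < 1 ∧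
        ∃ ℓ : ℝ → ℝ, ContDiff ℝ 1 ℓ ∧
          (∀ z ∈ Set.Icc a b, 0 < ℓ z) ∧
          StrictAntiOn ℓ (Set.Icc a b) ∧
          (∀ z ∈ Set.Icc a b, |deriv ℓ z| ≤ 1) ∧
          ℓ b + (∫ z in a..b, (deriv ℓ z) ^ 2)
              + ε * (1 / (ℓ a) ^ 2 + (∫ z in a..b, 1 / (ℓ z) ^ 2) + 1 / ℓ b) ^ 2
            ≤ C * ε ^ ((1:ℝ)/3) * Real.log (1/ε) ^ ((4:ℝ)/3) := by
  refine ⟨3, by norm_num, exp (-10), ⟨exp_pos _, exp_lt_one_iff.2 (by norm_num)⟩, ?_⟩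
  rintro ε ⟨hε, hε₀⟩
  set L := log (1 / ε) with hL_def
  have hL : 10 ≤ L := by
    have := log_le_log hε hε₀
    rw [log_exp] at this
    rw [hL_def, one_div, log_inv]; linarith
  have hεL : ε * L < 1 / 8 := mul_log_one_div_lt_of_le_exp hε hε₀
  set s := (ε * L) ^ ((1 : ℝ) / 3) with hs_def
  have hs : 0 < s := by positivity
  have hcube : s ^ 3 = ε * L := by
    rw [hs_def, one_div, ← Nat.cast_ofNat, rpow_inv_natCast_pow (by positivity) (by norm_num)]
  have hs_half : s < 1 / 2 := lt_of_pow_lt_pow_left₀ 3 (by norm_num) (by linarith)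
  have hlog : log (1 / (2 * s)) ≤ L := log_one_div_two_mul_le_of_cube_eq hε
    (hε₀.trans (exp_le_one_iff.2 (by norm_num))) hs (by linarith) hcube
  refine ⟨1 / 2, 1 - s, le_rfl, by linarith, by linarith, branchingProfile s,
    branchingProfile.contDiff hs, fun z _ => branchingProfile.pos hs z,
    (branchingProfile.strictAnti hs).strictAntiOn _,
    fun z _ => branchingProfile.abs_deriv_le_one hs z, ?_⟩
  calc reducedEnergy ε (1 / 2) (1 - s) (branchingProfile s) ≤ 3 * s * L :=
        reducedEnergy_branchingProfile_le_of_cube_eq hs hs_half.le hlog (by linarith) hcube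
    _ = 3 * ε ^ ((1 : ℝ) / 3) * L ^ ((4 : ℝ) / 3) := by
        rw [hs_def, mul_rpow hε.le (by linarith), show (4 : ℝ) / 3 = 1 / 3 + 1 by norm_num,
          rpow_add_one (by positivity)]
        ring
end

section
/- There exist constants C > 0 and ε₀ ∈ (0, 1) with the following property: for every ε ∈ (0, ε₀] there exist real numbers a, b with 1/2 ≤ a < b < 1 and a continuously differentiable, strictly positive, decreasing function ℓ : [a, b] → ℝ such that ℓ(b) + ε · ( ℓ(a)^{−2} + ∫_a^b ℓ(z)^{−2} dz + ℓ(b)^{−1} )² ≤ C ε^{1/3}. -/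
open MeasureTheory intervalIntegral

/-!
Take the linear lengthscale `ℓ(z) = 1 - z` on `[1/2, 1 - t]` with `t = ε^{1/3}`.
Since `(1 - z)⁻¹` is a primitive of `(1 - z)⁻²`, the bracket equals `2 + 2/t`, so the
functional is `t + t³ (2 + 2/t)² = t + t (2t + 2)² ≤ 17 t` once `t ≤ 1`.
-/

theorem integral_one_div_one_sub_sq {a b : ℝ} (hab : a ≤ b) (hb : b < 1) :
    ∫ z in a..b, 1 / (1 - z) ^ 2 = 1 / (1 - b) - 1 / (1 - a) := by
  have hpos : ∀ x ∈ Set.uIcc a b, 0 < 1 - x := fun x hx => by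
    rw [Set.uIcc_of_le hab] at hx
    linarith [hx.2]
  refine integral_eq_sub_of_hasDerivAt (f := fun z => 1 / (1 - z)) (fun x hx => ?_) ?_
  · simpa only [one_div, neg_neg] using ((hasDerivAt_id' x).const_sub 1).fun_inv (hpos x hx).ne'
  · exact ContinuousOn.intervalIntegrable <| continuousOn_const.div
      ((continuousOn_const.sub continuousOn_id).pow 2) fun x hx => (pow_pos (hpos x hx) 2).ne'

theorem linear_profile_cost_le {t : ℝ} (ht : 0 < t) (ht1 : t ≤ 1) :
    t + t ^ 3 * (2 + 2 / t) ^ 2 ≤ 17 * t := by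
  have hsq : (2 * t + 2) ^ 2 ≤ 16 := by nlinarith
  calc t + t ^ 3 * (2 + 2 / t) ^ 2 = t + t * (2 * t + 2) ^ 2 := by field_simp
    _ ≤ t + t * 16 := by gcongr
    _ = 17 * t := by ring

/-- Scaling upper bound for the one-dimensional reduction of Busse's multi-α
construction for Howard's problem (eq. (6.5)): there are `C > 0` and `ε₀ ∈ (0,1)`
such that for every `ε ∈ (0,ε₀]` there exist `1/2 ≤ a < b < 1` and a continuously
differentiable, strictly positive, decreasing lengthscale function `ℓ` on `[a,b]`
satisfying `ℓ(b) + ε (ℓ(a)⁻² + ∫_a^b ℓ⁻² + ℓ(b)⁻¹)² ≤ C ε^{1/3}`. -/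
theorem stmt12 :
    ∃ C > (0:ℝ), ∃ ε₀ ∈ Set.Ioo (0:ℝ) 1, ∀ ε ∈ Set.Ioc (0:ℝ) ε₀,
      ∃ a b : ℝ, 1/2 ≤ a ∧ a < b ∧ b < 1 ∧
        ∃ ℓ : ℝ → ℝ, ContDiff ℝ 1 ℓ ∧
          (∀ z ∈ Set.Icc a b, 0 < ℓ z) ∧
          StrictAntiOn ℓ (Set.Icc a b) ∧
          ℓ b + ε * (1 / (ℓ a) ^ 2 + (∫ z in a..b, 1 / (ℓ z) ^ 2) + 1 / ℓ b) ^ 2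
            ≤ C * ε ^ ((1:ℝ)/3) := by
  refine ⟨17, by norm_num, 1/27, ⟨by norm_num, by norm_num⟩, ?_⟩
  rintro ε ⟨hε, hε₀⟩
  have hcube : (ε ^ ((1:ℝ)/3)) ^ 3 = ε := by
    rw [one_div]
    exact_mod_cast Real.rpow_inv_natCast_pow hε.le (n := 3) (by norm_num)
  set t := ε ^ ((1:ℝ)/3)
  have ht : 0 < t := Real.rpow_pos_of_pos hε _
  have ht13 : t ≤ 1/3 :=
    (pow_le_pow_iff_left₀ ht.le (by norm_num) (by norm_num : 3 ≠ 0)).1 (by linarith)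
  refine ⟨1/2, 1 - t, le_rfl, by linarith, by linarith, fun z => 1 - z,
    contDiff_const.sub contDiff_id, fun z hz => by linarith [hz.2],
    fun _ _ _ _ h => sub_lt_sub_left h 1, ?_⟩
  beta_reduce
  rw [integral_one_div_one_sub_sq (by linarith) (by linarith), ← hcube]
  have hbracket : 1 / (1 - 1/2 : ℝ) ^ 2 + (1 / (1 - (1 - t)) - 1 / (1 - 1/2)) + 1 / (1 - (1 - t))
      = 2 + 2 / t := by
    ring
  rw [hbracket, sub_sub_cancel]
  exact linear_profile_cost_le ht (by linarith)
end
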